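/- arXiv:0804.0783 — 2 statements merged into one kernel-verified Lean document; each statement's English description precedes it below -/
import Mathlib

section
/- Suppose λ₁,…,λ_m ∈ [0,1) satisfy λᵢ² ≤ 1 − δ for some δ ∈ (0,1], and h : Fin m × Fin m × Fin m → ℝ (written h_{ik}^{j}) is arbitrary with h_{ik}^{j} = 0 whenever j > n. Then Σ_{i,k,j}(h_{ik}^{j})² − Σ_{i,k} λᵢ²(h_{ik}^{i})² − 2 Σ_{k, i<j} λᵢ λⱼ h_{ik}^{j} h_{jk}^{i} ≥ δ Σ_{i,k,j}(h_{ik}^{j})². -/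
/-- Splitting a double sum into diagonal and symmetrized off-diagonal parts. -/
lemma sum_split_diag {m : ℕ} (f : Fin m → Fin m → ℝ) :
    ∑ i, ∑ j, f i j
      = (∑ i, f i i) + ∑ i, ∑ j, (if i < j then f i j + f j i else 0) := by
  have key : ∀ i j : Fin m, f i j
      = (if j = i then f i j else 0) + (if i < j then f i j else 0)
        + (if j < i then f i j else 0) := by
    intro i j
    rcases lt_trichotomy i j with hij | hij | hij
    · simp [hij, hij.ne', not_lt_of_gt hij]
    · simp [hij, lt_irrefl]
    · simp [hij, hij.ne, not_lt_of_gt hij]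
  calc ∑ i, ∑ j, f i j
      = ∑ i, ∑ j, ((if j = i then f i j else 0) + (if i < j then f i j else 0)
          + (if j < i then f i j else 0)) := by
        refine Finset.sum_congr rfl fun i _ => Finset.sum_congr rfl fun j _ => key i j
    _ = (∑ i, ∑ j, (if j = i then f i j else 0))
          + (∑ i, ∑ j, (if i < j then f i j else 0))
          + (∑ i, ∑ j, (if j < i then f i j else 0)) := by
        simp [Finset.sum_add_distrib]
    _ = (∑ i, f i i) + (∑ i, ∑ j, (if i < j then f i j else 0))
          + (∑ i, ∑ j, (if i < j then f j i else 0)) := by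
        congr 1
        · congr 1
          refine Finset.sum_congr rfl fun i _ => ?_
          simp
        · rw [Finset.sum_comm]
    _ = (∑ i, f i i) + ∑ i, ∑ j, (if i < j then f i j + f j i else 0) := by
        rw [add_assoc]
        congr 1
        rw [← Finset.sum_add_distrib]
        refine Finset.sum_congr rfl fun i _ => ?_
        rw [← Finset.sum_add_distrib]
        refine Finset.sum_congr rfl fun j _ => ?_
        by_cases hij : i < j <;> simp [hij]

/-- Key algebraic estimate (5.4): if `λᵢ ∈ [0,1)` with `λᵢ² ≤ 1 − δ`, `δ ∈ (0,1]`, and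
`h_{ik}^{j}` are arbitrary reals vanishing for `j > n`, then
`Σ(h_{ik}^{j})² − Σ λᵢ²(h_{ik}^{i})² − 2 Σ_{k,i<j} λᵢλⱼ h_{ik}^{j} h_{jk}^{i}
  ≥ δ Σ(h_{ik}^{j})²`. -/
theorem second_fundamental_form_estimate (m n : ℕ) (δ : ℝ) (hδ0 : 0 < δ) (hδ1 : δ ≤ 1)
    (lam : Fin m → ℝ) (hnn : ∀ i, 0 ≤ lam i) (hlt1 : ∀ i, lam i < 1)
    (hbd : ∀ i, lam i ^ 2 ≤ 1 - δ)
    (h : Fin m → Fin m → Fin m → ℝ)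
    (hzero : ∀ i k j : Fin m, n ≤ (j : ℕ) → h i k j = 0) :
    δ * (∑ i, ∑ k, ∑ j, (h i k j) ^ 2) ≤
      (∑ i, ∑ k, ∑ j, (h i k j) ^ 2)
        - (∑ i, ∑ k, lam i ^ 2 * (h i k i) ^ 2)
        - 2 * (∑ k, ∑ i, ∑ j, if i < j then lam i * lam j * h i k j * h j k i else 0) := by
  have hL : ∀ i j : Fin m, lam i * lam j ≤ 1 - δ := by
    intro i j
    nlinarith [hbd i, hbd j, hnn i, hnn j, sq_nonneg (lam i - lam j)]
  -- reorder so that k is outermost in the first two sums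
  have hT : (∑ i, ∑ k, ∑ j, (h i k j) ^ 2)
      = ∑ k, ∑ i, ∑ j, (h i k j) ^ 2 := Finset.sum_comm
  have hD : (∑ i, ∑ k, lam i ^ 2 * (h i k i) ^ 2)
      = ∑ k, ∑ i, lam i ^ 2 * (h i k i) ^ 2 := Finset.sum_comm
  rw [hT, hD]
  have key : ∀ k : Fin m,
      δ * (∑ i, ∑ j, (h i k j) ^ 2) ≤
        (∑ i, ∑ j, (h i k j) ^ 2) - (∑ i, lam i ^ 2 * (h i k i) ^ 2)
          - 2 * (∑ i, ∑ j, if i < j then lam i * lam j * h i k j * h j k i else 0) := by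
    intro k
    rw [sum_split_diag (fun i j => (h i k j) ^ 2)]
    have bound1 : ∀ i : Fin m, δ * (h i k i) ^ 2 ≤ (h i k i) ^ 2 - lam i ^ 2 * (h i k i) ^ 2 := by
      intro i
      nlinarith [hbd i, sq_nonneg (h i k i)]
    have bound2 : ∀ i j : Fin m,
        δ * ((if i < j then (h i k j) ^ 2 + (h j k i) ^ 2 else 0))
          ≤ (if i < j then (h i k j) ^ 2 + (h j k i) ^ 2 else 0)
            - 2 * (if i < j then lam i * lam j * h i k j * h j k i else 0) := by
      intro i j
      by_cases hij : i < j
      · simp only [hij, if_true]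
        have h1 := hL i j
        have h2 := mul_nonneg (hnn i) (hnn j)
        nlinarith [mul_nonneg h2 (sq_nonneg (h i k j - h j k i)),
          mul_nonneg h2 (sq_nonneg (h i k j + h j k i)),
          mul_nonneg (sub_nonneg.mpr h1)
            (add_nonneg (sq_nonneg (h i k j)) (sq_nonneg (h j k i)))]
      · simp [hij]
    have s1 : δ * (∑ i, (h i k i) ^ 2)
        ≤ (∑ i, (h i k i) ^ 2) - (∑ i, lam i ^ 2 * (h i k i) ^ 2) := by
      rw [Finset.mul_sum, ← Finset.sum_sub_distrib]
      exact Finset.sum_le_sum fun i _ => bound1 i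
    have s2 : δ * (∑ i, ∑ j, (if i < j then (h i k j) ^ 2 + (h j k i) ^ 2 else 0))
        ≤ (∑ i, ∑ j, (if i < j then (h i k j) ^ 2 + (h j k i) ^ 2 else 0))
          - 2 * (∑ i, ∑ j, if i < j then lam i * lam j * h i k j * h j k i else 0) := by
      rw [Finset.mul_sum, Finset.mul_sum, ← Finset.sum_sub_distrib]
      refine Finset.sum_le_sum fun i _ => ?_
      rw [Finset.mul_sum, Finset.mul_sum, ← Finset.sum_sub_distrib]
      exact Finset.sum_le_sum fun j _ => bound2 i j
    linarith
  have total := Finset.sum_le_sum fun k (_ : k ∈ Finset.univ) => key k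
  simp only [← Finset.mul_sum, Finset.sum_sub_distrib] at total ⊢
  linarith
end

section
/- Let Σ be a compact topological space, J an open interval, and f ∈ C¹(Σ × J). Then the function f_max(t) = max_{x∈Σ} f(x,t) is locally Lipschitz continuous on J, and for almost every t, its derivative satisfies f_max'(t) = (∂f/∂t)(x_t, t) where x_t is any point where the maximum f(·,t) is attained. -/
/-!
On a compact interval the `t`-derivatives of the functions `f (x, ·)` are
bounded uniformly in `x`, so these functions are uniformly Lipschitz, and so is their supremum
`f_max`. By Rademacher's theorem `f_max` is then differentiable almost everywhere. At such a
point `t`, if `f (·, t)` is maximal at `x_t`, then `f_max - f (x_t, ·) ≥ 0` has a minimum at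
`t`, so its derivative vanishes there.
-/

open Set MeasureTheory Filter Topology

theorem LipschitzOnWith.ciSup {ι α : Type*} [Nonempty ι] [PseudoMetricSpace α]
    {g : ι → α → ℝ} {K : NNReal} {s : Set α} (hg : ∀ i, LipschitzOnWith K (g i) s)
    (hbdd : ∀ y ∈ s, BddAbove (range fun i => g i y)) :
    LipschitzOnWith K (fun y => ⨆ i, g i y) s :=
  LipschitzOnWith.of_le_add_mul K fun _ hx y hy => ciSup_le fun i =>
    ((hg i).le_add_mul hx hy).trans (add_le_add_left (le_ciSup (hbdd y hy) i) _)

theorem exists_forall_lipschitzOnWith_of_hasDerivWithinAt {S : Type*} [TopologicalSpace S]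
    [CompactSpace S] {f f' : S × ℝ → ℝ} {s : Set ℝ} (hs : IsCompact s) (hconv : Convex ℝ s)
    (hf' : ContinuousOn f' (univ ×ˢ s))
    (hderiv : ∀ x, ∀ u ∈ s, HasDerivWithinAt (fun v => f (x, v)) (f' (x, u)) s u) :
    ∃ K : NNReal, ∀ x, LipschitzOnWith K (fun u => f (x, u)) s := by
  obtain ⟨C, hC⟩ := (isCompact_univ.prod hs).exists_bound_of_continuousOn hf'
  refine ⟨C.toNNReal, fun x => hconv.lipschitzOnWith_of_nnnorm_hasDerivWithin_le (hderiv x)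
    fun u hu => ?_⟩
  rw [← NNReal.coe_le_coe, coe_nnnorm, Real.coe_toNNReal']
  exact (hC _ ⟨trivial, hu⟩).trans (le_max_left _ _)

theorem LocallyLipschitzOn.ae_differentiableAt_of_isOpen {E F : Type*} [NormedAddCommGroup E]
    [NormedSpace ℝ E] [FiniteDimensional ℝ E] [MeasurableSpace E] [BorelSpace E]
    [NormedAddCommGroup F] [NormedSpace ℝ F] [FiniteDimensional ℝ F]
    {μ : Measure E} [μ.IsAddHaarMeasure] {f : E → F} {U : Set E}
    (hU : IsOpen U) (hf : LocallyLipschitzOn U f) :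
    ∀ᵐ x ∂μ, x ∈ U → DifferentiableAt ℝ f x := by
  rw [ae_iff]
  refine measure_null_of_locally_null _ fun x hx => ?_
  obtain ⟨hxU, -⟩ := Classical.not_imp.1 hx
  obtain ⟨K, t, ht, hlip⟩ := hf hxU
  rw [hU.nhdsWithin_eq hxU, ← interior_mem_nhds] at ht
  refine ⟨_, inter_mem_nhdsWithin _ ht, measure_mono_null ?_
    (ae_iff.1 ((hlip.mono interior_subset).ae_differentiableWithinAt_of_mem (μ := μ)))⟩
  rintro y ⟨hy, hyt⟩ hdiff
  exact hy fun _ => (hdiff hyt).differentiableAt (isOpen_interior.mem_nhds hyt)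

theorem DifferentiableAt.hasFDerivAt_of_eventually_le_of_eq {E : Type*} [NormedAddCommGroup E]
    [NormedSpace ℝ E] {F g : E → ℝ} {g' : E →L[ℝ] ℝ} {t : E} (hF : DifferentiableAt ℝ F t)
    (hg : HasFDerivAt g g' t) (hle : ∀ᶠ s in 𝓝 t, g s ≤ F s) (heq : g t = F t) :
    HasFDerivAt F g' t := by
  have hmin : IsLocalMin (fun s => F s - g s) t := hle.mono fun s hs => by
    simp only [heq, sub_self, sub_nonneg, hs]
  have hzero := hmin.hasFDerivAt_eq_zero (hF.hasFDerivAt.sub hg)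
  exact sub_eq_zero.1 hzero ▸ hF.hasFDerivAt
/-- Hamilton's trick: for `Σ` compact and `f ∈ C¹(Σ × J)`, the function
`f_max(t) = max_x f(x,t)` is locally Lipschitz on the open interval `J = (a,b)`, and for
a.e. `t`, `f_max'(t) = ∂f/∂t (x_t, t)` at any maximum point `x_t`. -/
theorem hamilton_trick {S : Type*} [TopologicalSpace S] [CompactSpace S] [Nonempty S]
    (a b : ℝ) (f ft : S × ℝ → ℝ)
    (hf : Continuous f) (hft : Continuous ft)
    (hderiv : ∀ x : S, ∀ t ∈ Ioo a b, HasDerivAt (fun s => f (x, s)) (ft (x, t)) t) :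
    (∀ t ∈ Ioo a b, ∃ ε > 0, ∃ K : NNReal,
        LipschitzOnWith K (fun s => ⨆ x : S, f (x, s)) (Ioo (t - ε) (t + ε)))
    ∧ (∀ᵐ t ∂(volume.restrict (Ioo a b)), ∀ x : S,
        (∀ y : S, f (y, t) ≤ f (x, t)) →
          HasDerivAt (fun s => ⨆ z : S, f (z, s)) (ft (x, t)) t) := by
  set F : ℝ → ℝ := fun s => ⨆ x : S, f (x, s)
  have hbdd : ∀ s, BddAbove (range fun x : S => f (x, s)) := fun s =>
    (isCompact_range (by fun_prop)).bddAbove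
  have hlip : ∀ t ∈ Ioo a b, ∃ ε > 0, ∃ K : NNReal,
      LipschitzOnWith K F (Icc (t - ε) (t + ε)) := by
    intro t ht
    obtain ⟨ε, hε, hsub⟩ := Metric.nhds_basis_closedBall.mem_iff.1 (isOpen_Ioo.mem_nhds ht)
    rw [Real.closedBall_eq_Icc] at hsub
    obtain ⟨K, hK⟩ := exists_forall_lipschitzOnWith_of_hasDerivWithinAt isCompact_Icc
      (convex_Icc _ _) hft.continuousOn fun x u hu => (hderiv x u (hsub hu)).hasDerivWithinAt
    exact ⟨ε, hε, K, LipschitzOnWith.ciSup hK fun s _ => hbdd s⟩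
  refine ⟨fun t ht => ?_, ?_⟩
  · obtain ⟨ε, hε, K, hK⟩ := hlip t ht
    exact ⟨ε, hε, K, hK.mono Ioo_subset_Icc_self⟩
  have hloc : LocallyLipschitzOn (Ioo a b) F := fun t ht => by
    obtain ⟨ε, hε, K, hK⟩ := hlip t ht
    exact ⟨K, _, nhdsWithin_le_nhds (Icc_mem_nhds (by linarith) (by linarith)), hK⟩
  rw [ae_restrict_iff' measurableSet_Ioo]
  filter_upwards [hloc.ae_differentiableAt_of_isOpen isOpen_Ioo] with t hdiff ht x hx
  exact (hdiff ht).hasFDerivAt_of_eventually_le_of_eq (hderiv x t ht).hasFDerivAt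
    (.of_forall fun s => le_ciSup (hbdd s) x) (le_antisymm (le_ciSup (hbdd t) x) (ciSup_le hx))
end
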